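/- For every λ ≥ 0, every natural number j ≥ 1 and every A ⊆ ℕ: −(1 − e^{−λ}) ≤ λ·(g(j+1,λ,A) − g(j,λ,A)) ≤ 1 − e^{−λ}, i.e. |λ·(g(j+1,λ,A) − g(j,λ,A))| ≤ 1 − e^{−λ}. -/

import Mathlib

open scoped BigOperators

/-- Poisson pmf: Po(k;lam) = lam^k * e^(-lam) / k!  (with the convention 0^0 = 1). -/
noncomputable def Po (k : ℕ) (lam : ℝ) : ℝ := lam ^ k * Real.exp (-lam) / (Nat.factorial k)

/-- Poisson measure of a set A of naturals: Po(A;lam) = sum over k in A of Po(k;lam). -/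
noncomputable def PoSet (A : Set ℕ) (lam : ℝ) : ℝ := ∑' k : A, Po k lam

/-- The scalar Stein-Chen solution g(j,lam,A), defined recursively by g(0,lam,A) = 0 and
g(j,lam,A) = lam⁻¹ * ((j-1)*g(j-1,lam,A) + 1_A(j-1) - Po(A;lam))
             + (1/j) * 1_{lam=0} * (1_A(0) - 1_A(j)) for j ≥ 1,
with the convention 0⁻¹ = 0. -/
noncomputable def steinChen : ℕ → ℝ → Set ℕ → ℝ
  | 0, _, _ => 0
  | (j + 1), lam, A =>
      lam⁻¹ * ((j : ℝ) * steinChen j lam A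
          + A.indicator (fun _ => (1 : ℝ)) j - PoSet A lam)
        + (1 / ((j : ℝ) + 1)) * (if lam = 0 then (1 : ℝ) else 0)
          * (A.indicator (fun _ => (1 : ℝ)) 0 - A.indicator (fun _ => (1 : ℝ)) (j + 1))

/-!
For `λ > 0`, weighting the recursion by the Poisson probabilities `p_k` and using
`(k + 1) p_{k+1} = λ p_k` gives `j p_j g(j) = ∑_{k<j} p_k (1_A(k) - Po(A;λ))`. Hence
`j p_j λ (g(j+1) - g(j))` is an affine function of the Poisson masses of `A` below `j`, at
`j` and above `j`. The coefficients of the masses below and above `j` are nonpositive, since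
`λ P(X < j) ≤ j P(1 ≤ X ≤ j)` and `j P(X > j) ≤ λ P(X ≥ j)`, and the mass at `j` enters with
a coefficient between `0` and `j (1 - e^{-λ})`. For `A = ℕ` the expression vanishes, which gives
the lower bound.
-/

open Finset

lemma Summable.tsum_eq_sum_range_add_add_tsum {f : ℕ → ℝ} (hf : Summable f) (j : ℕ) :
    ∑' k, f k = ∑ k ∈ range j, f k + f j + ∑' k, f (k + (j + 1)) := by
  rw [← hf.sum_add_tsum_nat_add (j + 1), sum_range_succ]

/-- `a, b, c` stand for the Poisson masses of `A` below, at and above `j`, `u, p, v` for those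
of `ℕ`, and `e` for the mass of `0`. -/
lemma abs_increment_le_of_masses {j lam e u p v a b c P : ℝ} (hj : 0 ≤ j) (he : 0 ≤ e)
    (hlu : 0 ≤ lam * u) (hsum : u + p + v = 1) (hP : P = a + b + c)
    (ha : a ∈ Set.Icc 0 u) (hb : b ∈ Set.Icc 0 p) (hc : c ∈ Set.Icc 0 v)
    (head : lam * u ≤ j * (u + p - e)) (tail : j * v ≤ lam * (p + v)) :
    |(j - lam) * (a - P * u) + j * (b - P * p)| ≤ j * p * (1 - e) := by
  obtain ⟨ha₀, hau⟩ := ha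
  obtain ⟨hb₀, hbp⟩ := hb
  obtain ⟨hc₀, hcv⟩ := hc
  set w := (j - lam) * u + j * p with hw_def
  have hX : (j - lam) * (a - P * u) + j * (b - P * p)
      = a * (j - lam - w) + b * (j - w) - c * w := by
    rw [hP]; ring
  have hα : j - lam - w ≤ 0 := by
    have : j - lam - w = j * v - lam * (p + v) := by
      rw [hw_def, show u = 1 - p - v by linarith]; ring
    linarith
  have hw : j * e ≤ w := by linarith
  have hw₀ : 0 ≤ w := (mul_nonneg hj he).trans hw
  have hjw : 0 ≤ j - w := by nlinarith [mul_nonneg hj (hc₀.trans hcv)]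
  have hjw' : j - w ≤ j - j * e := by linarith
  have hp : 0 ≤ p := hb₀.trans hbp
  rw [hX, abs_le]
  constructor
  · -- the affine form at `(a, b, c) = (u, 0, v)`; at `(u, p, v)`, i.e. `A = ℕ`, it vanishes
    have hfull : u * (j - lam - w) - v * w = -(p * (j - w)) := by
      rw [hw_def, show v = 1 - u - p by linarith]; ring
    linarith [mul_le_mul_of_nonpos_right hau hα, mul_le_mul_of_nonneg_right hcv hw₀,
      mul_nonneg hb₀ hjw, mul_le_mul_of_nonneg_left hjw' hp]
  · linarith [mul_nonpos_of_nonneg_of_nonpos ha₀ hα, mul_nonneg hc₀ hw₀,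
      mul_le_mul_of_nonneg_right hbp hjw, mul_le_mul_of_nonneg_left hjw' hp]

section Poisson

variable {lam : ℝ}

lemma Po_nonneg (hlam : 0 ≤ lam) (k : ℕ) : 0 ≤ Po k lam := by unfold Po; positivity

lemma Po_pos (hlam : 0 < lam) (k : ℕ) : 0 < Po k lam := by unfold Po; positivity

lemma Po_zero (lam : ℝ) : Po 0 lam = Real.exp (-lam) := by simp [Po]

lemma succ_mul_Po_succ (k : ℕ) (lam : ℝ) :
    ((k : ℝ) + 1) * Po (k + 1) lam = lam * Po k lam := by
  unfold Po
  rw [Nat.factorial_succ, pow_succ]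
  push_cast
  field_simp

lemma hasSum_Po (lam : ℝ) : HasSum (fun k => Po k lam) 1 := by
  have := (NormedSpace.expSeries_div_hasSum_exp lam).mul_right (Real.exp (-lam))
  rw [← Real.exp_eq_exp_ℝ, ← Real.exp_add, add_neg_cancel, Real.exp_zero] at this
  simpa only [Po, mul_div_right_comm] using this

lemma mul_sum_range_Po_le (hlam : 0 ≤ lam) (j : ℕ) :
    lam * ∑ k ∈ range j, Po k lam ≤ j * (∑ k ∈ range (j + 1), Po k lam - Po 0 lam) := by
  rw [sum_range_succ', add_sub_cancel_right, mul_sum, mul_sum]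
  refine sum_le_sum fun k hk => ?_
  rw [← succ_mul_Po_succ]
  have : (k : ℝ) + 1 ≤ j := by exact_mod_cast mem_range.mp hk
  exact mul_le_mul_of_nonneg_right this (Po_nonneg hlam _)

lemma mul_tsum_Po_le (hlam : 0 ≤ lam) (j : ℕ) :
    j * ∑' k, Po (k + (j + 1)) lam ≤ lam * (Po j lam + ∑' k, Po (k + (j + 1)) lam) := by
  have htail : Summable fun k => Po (k + j) lam :=
    (summable_nat_add_iff j).mpr (hasSum_Po lam).summable
  have hshift : Po j lam + ∑' k, Po (k + (j + 1)) lam = ∑' k, Po (k + j) lam := by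
    rw [htail.tsum_eq_zero_add]
    simp only [zero_add, add_right_comm _ 1 j, add_assoc]
  rw [hshift, ← tsum_mul_left, ← tsum_mul_left]
  refine Summable.tsum_le_tsum (fun k => ?_)
    (((summable_nat_add_iff (j + 1)).mpr (hasSum_Po lam).summable).mul_left _) (htail.mul_left _)
  have hrec := succ_mul_Po_succ (k + j) lam
  rw [show k + j + 1 = k + (j + 1) by ring] at hrec
  rw [← hrec]
  push_cast
  exact mul_le_mul_of_nonneg_right (by linarith [(k.cast_nonneg : (0 : ℝ) ≤ k)])
    (Po_nonneg hlam _)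

lemma PoSet_eq_tsum (A : Set ℕ) (lam : ℝ) :
    PoSet A lam = ∑' k, Po k lam * A.indicator (fun _ => (1 : ℝ)) k := by
  rw [PoSet, _root_.tsum_subtype A (fun k => Po k lam)]
  congr 1 with k
  by_cases hk : k ∈ A <;> simp [hk]

lemma Po_mul_indicator_mem_Icc (hlam : 0 ≤ lam) (A : Set ℕ) (k : ℕ) :
    Po k lam * A.indicator (fun _ => (1 : ℝ)) k ∈ Set.Icc 0 (Po k lam) := by
  by_cases hk : k ∈ A <;> simp [hk, Po_nonneg hlam]

lemma summable_Po_mul_indicator (hlam : 0 ≤ lam) (A : Set ℕ) :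
    Summable fun k => Po k lam * A.indicator (fun _ => (1 : ℝ)) k :=
  (hasSum_Po lam).summable.of_nonneg_of_le (fun k => (Po_mul_indicator_mem_Icc hlam A k).1)
    (fun k => (Po_mul_indicator_mem_Icc hlam A k).2)

lemma sum_range_Po_mul_indicator_mem_Icc (hlam : 0 ≤ lam) (A : Set ℕ) (n : ℕ) :
    ∑ k ∈ range n, Po k lam * A.indicator (fun _ => (1 : ℝ)) k
      ∈ Set.Icc 0 (∑ k ∈ range n, Po k lam) :=
  ⟨sum_nonneg fun k _ => (Po_mul_indicator_mem_Icc hlam A k).1,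
    sum_le_sum fun k _ => (Po_mul_indicator_mem_Icc hlam A k).2⟩

lemma tsum_Po_mul_indicator_nat_add_mem_Icc (hlam : 0 ≤ lam) (A : Set ℕ) (n : ℕ) :
    ∑' k, Po (k + n) lam * A.indicator (fun _ => (1 : ℝ)) (k + n)
      ∈ Set.Icc 0 (∑' k, Po (k + n) lam) :=
  ⟨tsum_nonneg fun _ => (Po_mul_indicator_mem_Icc hlam A _).1,
    Summable.tsum_le_tsum (fun _ => (Po_mul_indicator_mem_Icc hlam A _).2)
      ((summable_nat_add_iff n).mpr (summable_Po_mul_indicator hlam A))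
      ((summable_nat_add_iff n).mpr (hasSum_Po lam).summable)⟩

end Poisson

section SteinChen

variable {lam : ℝ} (A : Set ℕ)

lemma mul_steinChen_succ (hlam : lam ≠ 0) (j : ℕ) :
    lam * steinChen (j + 1) lam A
      = j * steinChen j lam A + A.indicator (fun _ => (1 : ℝ)) j - PoSet A lam := by
  rw [steinChen, if_neg hlam, mul_zero, zero_mul, add_zero, mul_inv_cancel_left₀ hlam]

lemma mul_Po_mul_steinChen (hlam : lam ≠ 0) (j : ℕ) :
    j * Po j lam * steinChen j lam A
      = ∑ k ∈ range j, Po k lam * (A.indicator (fun _ => (1 : ℝ)) k - PoSet A lam) := by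
  induction j with
  | zero => simp
  | succ j ih =>
    rw [sum_range_succ, ← ih]
    push_cast
    linear_combination steinChen (j + 1) lam A * succ_mul_Po_succ j lam
      + Po j lam * mul_steinChen_succ A hlam j

lemma mul_Po_mul_steinChen_increment (hlam : lam ≠ 0) (j : ℕ) :
    j * Po j lam * (lam * (steinChen (j + 1) lam A - steinChen j lam A))
      = (j - lam) * ∑ k ∈ range j, Po k lam * (A.indicator (fun _ => (1 : ℝ)) k - PoSet A lam)
        + j * Po j lam * (A.indicator (fun _ => (1 : ℝ)) j - PoSet A lam) := by
  rw [← mul_Po_mul_steinChen A hlam]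
  linear_combination j * Po j lam * mul_steinChen_succ A hlam j

end SteinChen

/-- The Stein-Chen increment bound: for lam ≥ 0, j ≥ 1 and A ⊆ ℕ,
|lam * (g(j+1,lam,A) - g(j,lam,A))| ≤ 1 - e^(-lam). -/
theorem steinChen_delta_bound (lam : ℝ) (hlam : 0 ≤ lam) (j : ℕ) (hj : 1 ≤ j)
    (A : Set ℕ) :
    |lam * (steinChen (j + 1) lam A - steinChen j lam A)| ≤ 1 - Real.exp (-lam) := by
  rcases hlam.eq_or_lt with rfl | hpos
  · simp
  set ι := A.indicator (fun _ => (1 : ℝ))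
  have hone := (hasSum_Po lam).tsum_eq
  rw [(hasSum_Po lam).summable.tsum_eq_sum_range_add_add_tsum j] at hone
  have hPoSet := PoSet_eq_tsum A lam
  rw [(summable_Po_mul_indicator hlam A).tsum_eq_sum_range_add_add_tsum j] at hPoSet
  have key := abs_increment_le_of_masses (j := j) (Nat.cast_nonneg j) (Po_nonneg hlam 0)
    (mul_nonneg hlam (sum_nonneg fun k _ => Po_nonneg hlam k)) hone hPoSet
    (sum_range_Po_mul_indicator_mem_Icc hlam A j) (Po_mul_indicator_mem_Icc hlam A j)
    (tsum_Po_mul_indicator_nat_add_mem_Icc hlam A (j + 1))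
    (by rw [← sum_range_succ]; exact mul_sum_range_Po_le hlam j) (mul_tsum_Po_le hlam j)
  have hsplit : ∑ k ∈ range j, Po k lam * (ι k - PoSet A lam)
      = ∑ k ∈ range j, Po k lam * ι k - PoSet A lam * ∑ k ∈ range j, Po k lam := by
    simp only [mul_sub, sum_sub_distrib, ← sum_mul]
    ring
  have hjp : 0 < (j : ℝ) * Po j lam := mul_pos (by exact_mod_cast hj) (Po_pos hpos j)
  refine le_of_mul_le_mul_left ?_ hjp
  rw [← abs_of_pos hjp, ← abs_mul, mul_Po_mul_steinChen_increment A hpos.ne', abs_of_pos hjp,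
    ← Po_zero, hsplit]
  exact (congrArg abs (by ring)).trans_le key
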